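/- On the elliptic curve E_t: ζ²η = σ(tη² + ((t−3)²−12)/4·ση + σ²), the point P₅ = (t : t(t−1)/2 : 1) satisfies 2·P₅ = P₃ where P₃ = (1 : (t−1)/2 : 1); consequently P₅ has order dividing 6. -/

import Mathlib

open WeierstrassCurve

/-- The sunset elliptic curve `ζ²η = σ(tη² + ((t−3)²−12)/4·ση + σ²)` in the affine
chart `η = 1`, i.e. `y² = x³ + ((t−3)²−12)/4·x² + t·x`. -/
noncomputable def sunsetCurve (t : ℝ) : WeierstrassCurve.Affine ℝ :=
  { a₁ := 0, a₂ := ((t - 3) ^ 2 - 12) / 4, a₃ := 0, a₄ := t, a₆ := 0 }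

/-- The point `P₃ = (1, (t−1)/2)` lies on the sunset curve. -/
theorem sunset_P3_equation (t : ℝ) : (sunsetCurve t).Equation 1 ((t - 1) / 2) := by
  simp only [sunsetCurve, WeierstrassCurve.Affine.equation_iff]; ring

/-- The point `P₅ = (t, t(t−1)/2)` lies on the sunset curve. -/
theorem sunset_P5_equation (t : ℝ) : (sunsetCurve t).Equation t (t * (t - 1) / 2) := by
  simp only [sunsetCurve, WeierstrassCurve.Affine.equation_iff]; ring

/-!
The tangent line at `P₅` has slope `(t+1)/2` and meets the curve again at `-P₃`, so
`2 P₅ = P₃`; the tangent line at `P₃` has slope `(t-3)/2` and meets the curve only at `P₃`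
(it is an inflection tangent), so `2 P₃ = -P₃`. Hence `3 P₃ = 0` and `6 P₅ = 3 P₃ = 0`.
-/

namespace WeierstrassCurve.Affine.Point

variable {F : Type*} [Field F] [DecidableEq F] {W : Affine F}

lemma two_zsmul_some_of_Y_ne {x y x' y' : F} {h : W.Nonsingular x y}
    {h' : W.Nonsingular x' y'} (hy : y ≠ W.negY x y)
    (hx' : W.addX x x (W.slope x x y y) = x') (hy' : W.addY x x y (W.slope x x y y) = y') :
    (2 : ℤ) • some x y h = some x' y' h' := by
  subst hx' hy'
  rw [two_zsmul, add_self_of_Y_ne hy]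

end WeierstrassCurve.Affine.Point

open WeierstrassCurve.Affine

lemma sunsetCurve_Δ (t : ℝ) : (sunsetCurve t).Δ = t ^ 2 * (t - 9) * (t - 1) ^ 3 := by
  simp only [sunsetCurve, WeierstrassCurve.Δ, WeierstrassCurve.b₂, WeierstrassCurve.b₄,
    WeierstrassCurve.b₆, WeierstrassCurve.b₈]
  ring

lemma sunsetCurve_negY (t x y : ℝ) : (sunsetCurve t).negY x y = -y := by
  simp [negY, sunsetCurve]

lemma sunsetCurve_Y_ne_negY {t x y : ℝ} (hy : y ≠ 0) : y ≠ (sunsetCurve t).negY x y := by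
  rw [sunsetCurve_negY]; contrapose! hy; linarith

lemma sunsetCurve_slope_self {t x y : ℝ} (hy : y ≠ 0) :
    (sunsetCurve t).slope x x y y = (3 * x ^ 2 + ((t - 3) ^ 2 - 12) / 2 * x + t) / (2 * y) := by
  rw [slope_of_Y_ne rfl (sunsetCurve_Y_ne_negY hy), sunsetCurve_negY]
  simp only [sunsetCurve]
  ring

lemma sunsetCurve_two_zsmul_P5 {t : ℝ} (ht₀ : t ≠ 0) (ht₁ : t ≠ 1)
    {h₅ : (sunsetCurve t).Nonsingular t (t * (t - 1) / 2)}
    {h₃ : (sunsetCurve t).Nonsingular 1 ((t - 1) / 2)} :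
    (2 : ℤ) • Point.some _ _ h₅ = Point.some _ _ h₃ := by
  have hy : t * (t - 1) / 2 ≠ 0 := by
    have := sub_ne_zero.mpr ht₁
    positivity
  have hslope : (sunsetCurve t).slope t t (t * (t - 1) / 2) (t * (t - 1) / 2) = (t + 1) / 2 := by
    rw [sunsetCurve_slope_self hy]
    field_simp [sub_ne_zero.mpr ht₁]
    ring
  have hx : (sunsetCurve t).addX t t ((t + 1) / 2) = 1 := by
    simp only [addX, sunsetCurve]; ring
  refine Point.two_zsmul_some_of_Y_ne (sunsetCurve_Y_ne_negY hy) ?_ ?_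
  · rw [hslope, hx]
  · rw [hslope, addY, negAddY, hx, sunsetCurve_negY]; ring

lemma sunsetCurve_two_zsmul_P3 {t : ℝ} (ht₁ : t ≠ 1)
    {h₃ : (sunsetCurve t).Nonsingular 1 ((t - 1) / 2)} :
    (2 : ℤ) • Point.some _ _ h₃ = -Point.some _ _ h₃ := by
  have hy : (t - 1) / 2 ≠ 0 := by
    have := sub_ne_zero.mpr ht₁
    positivity
  have hslope : (sunsetCurve t).slope 1 1 ((t - 1) / 2) ((t - 1) / 2) = (t - 3) / 2 := by
    rw [sunsetCurve_slope_self hy]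
    field_simp [sub_ne_zero.mpr ht₁]
    ring
  have hx : (sunsetCurve t).addX 1 1 ((t - 3) / 2) = 1 := by
    simp only [addX, sunsetCurve]; ring
  rw [Point.neg_some]
  refine Point.two_zsmul_some_of_Y_ne (sunsetCurve_Y_ne_negY hy) ?_ ?_
  · rw [hslope, hx]
  · rw [hslope, addY, negAddY, hx, sunsetCurve_negY, sunsetCurve_negY]; ring

theorem sunset_P5_six_torsion (t : ℝ) (hΔ : (sunsetCurve t).Δ ≠ 0) :
    (2 : ℤ) • (WeierstrassCurve.Affine.Point.some _ _
        ((WeierstrassCurve.Affine.equation_iff_nonsingular_of_Δ_ne_zero (W := sunsetCurve t) hΔ).mp (sunset_P5_equation t)))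
      = WeierstrassCurve.Affine.Point.some _ _
        ((WeierstrassCurve.Affine.equation_iff_nonsingular_of_Δ_ne_zero (W := sunsetCurve t) hΔ).mp (sunset_P3_equation t))
    ∧ (6 : ℤ) • (WeierstrassCurve.Affine.Point.some _ _
        ((WeierstrassCurve.Affine.equation_iff_nonsingular_of_Δ_ne_zero (W := sunsetCurve t) hΔ).mp (sunset_P5_equation t)))
      = (0 : (sunsetCurve t).Point) := by
  have hΔ' : t ^ 2 * (t - 9) * (t - 1) ^ 3 ≠ 0 := sunsetCurve_Δ t ▸ hΔ
  have ht₀ : t ≠ 0 := by rintro rfl; simp at hΔ'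
  have ht₁ : t ≠ 1 := by rintro rfl; simp at hΔ'
  have h2P₅ := sunsetCurve_two_zsmul_P5 ht₀ ht₁
    (h₅ := (equation_iff_nonsingular_of_Δ_ne_zero hΔ).mp (sunset_P5_equation t))
    (h₃ := (equation_iff_nonsingular_of_Δ_ne_zero hΔ).mp (sunset_P3_equation t))
  refine ⟨h2P₅, ?_⟩
  rw [show (6 : ℤ) = (2 + 1) * 2 by norm_num, mul_zsmul, h2P₅, add_zsmul, one_zsmul,
    sunsetCurve_two_zsmul_P3 ht₁, neg_add_cancel]
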